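/- Let G: [0,1] × M → ℝ be a quasi-autonomous Hamiltonian on a closed symplectic manifold (M,ω) such that ρ(G;1) = E⁻(G). Then G is negative Hofer-length minimizing in its homotopy class with fixed ends: E⁻(G) ≤ E⁻(F) for every Hamiltonian F with F ∼ G. -/
import Mathlib


open Set Filter Topology MeasureTheory

noncomputable section

/-- The negative Hofer length `E⁻(H) = ∫₀¹ −min_x H(t,x) dt`. -/
def Eminus {M : Type*} (H : ℝ → M → ℝ) : ℝ :=
  ∫ t in (0:ℝ)..1, -(⨅ x : M, H t x)

/-- `H` is quasi-autonomous. -/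
def QuasiAutonomous {M : Type*} (H : ℝ → M → ℝ) : Prop :=
  ∃ xm xp : M, ∀ t ∈ Set.Icc (0:ℝ) 1, (∀ x : M, H t xm ≤ H t x) ∧ (∀ x : M, H t x ≤ H t xp)

/-- Abstract data of the spectral invariant `ρ(·;1)` on a closed symplectic manifold,
together with its basic properties from [Oh5]. -/
structure RhoSetting (M : Type*) where
  /-- `equiv F G` : the Hamiltonian paths `φ_F` and `φ_G` are homotopic with fixed
  ends. -/
  equiv : (ℝ → M → ℝ) → (ℝ → M → ℝ) → Prop
  /-- the spectral invariant `ρ(H;1)`: the infimum of levels `λ_H(α)` over Floer cycles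
  `α ∈ CF(H)` representing the class `1^♭` dual to `1 ∈ QH*(M)`. -/
  rho : (ℝ → M → ℝ) → ℝ
  /-- `ρ(F;1) = ρ(G;1)` whenever `F ∼ G`. -/
  rho_congr : ∀ F G : ℝ → M → ℝ, equiv F G → rho F = rho G
  /-- `ρ(H;1) ≤ E⁻(H)` for all `H`. -/
  rho_le_Eminus : ∀ H : ℝ → M → ℝ, rho H ≤ Eminus H

/-- **Theorem 3.10.** Let `G` be a quasi-autonomous Hamiltonian on a closed symplectic
manifold with `ρ(G;1) = E⁻(G)`. Then `G` is negative Hofer-length minimizing in its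
homotopy class with fixed ends: `E⁻(G) ≤ E⁻(F)` for every `F ∼ G`. -/
theorem stmt8 {M : Type*} [TopologicalSpace M] [CompactSpace M] [Nonempty M]
    (D : RhoSetting M) (G : ℝ → M → ℝ)
    (hq : QuasiAutonomous G) (hrho : D.rho G = Eminus G) :
    ∀ F : ℝ → M → ℝ, D.equiv F G → Eminus G ≤ Eminus F := by
  intro F hFG
  calc Eminus G = D.rho G := hrho.symm
    _ = D.rho F := (D.rho_congr F G hFG).symm
    _ ≤ Eminus F := D.rho_le_Eminus F
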